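/- arXiv:2211.04832 — 6 statements merged into one kernel-verified Lean document; each statement's English description precedes it below -/
import Mathlib

section
/- Let f : M → N be a homomorphism of torsion-free (equivalently, flat) abelian groups. Suppose that for every prime p the induced map M/pM → N/pN is injective, and that the induced map M ⊗_ℤ ℚ → N ⊗_ℤ ℚ is an isomorphism. Then f is an isomorphism. -/
open TensorProduct

section aux

variable {M N : Type*} [AddCommGroup M] [AddCommGroup N]

/-- `1 ⊗ₜ ·` makes `ℚ ⊗ M` a localized module at the nonzero integers. -/
lemma isLocalizedModule_ratTensor [NoZeroSMulDivisors ℤ M] :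
    IsLocalizedModule (nonZeroDivisors ℤ) (TensorProduct.mk ℤ ℚ M 1) :=
  (isLocalizedModule_iff_isBaseChange (nonZeroDivisors ℤ) ℚ _).mpr
    (TensorProduct.isBaseChange ℤ M ℚ)

lemma ratTensor_injective [NoZeroSMulDivisors ℤ M] :
    Function.Injective (TensorProduct.mk ℤ ℚ M 1) := by
  have h := isLocalizedModule_ratTensor (M := M)
  intro a b hab
  have : TensorProduct.mk ℤ ℚ M 1 (a - b) = 0 := by
    simp only [map_sub, hab, sub_self]
  obtain ⟨s, hs⟩ := (IsLocalizedModule.eq_zero_iff (nonZeroDivisors ℤ) _).mp this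
  have : (s : ℤ) • (a - b) = 0 := hs
  have := (smul_eq_zero.mp this).resolve_left (nonZeroDivisors.coe_ne_zero s)
  exact sub_eq_zero.mp this

lemma key_descent [NoZeroSMulDivisors ℤ N] (f : M →+ N)
    (hmodp : ∀ p : ℕ, p.Prime → ∀ m : M,
      (∃ n : N, f m = (p : ℤ) • n) → ∃ m' : M, m = (p : ℤ) • m') :
    ∀ k : ℕ, 0 < k → ∀ n : N, ∀ m : M, f m = (k : ℤ) • n → ∃ m', f m' = n := by
  intro k
  induction k using Nat.strong_induction_on with
  | _ k ih =>
    intro hk n m hm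
    rcases eq_or_ne k 1 with rfl | hk1
    · exact ⟨m, by simpa using hm⟩
    · set p := k.minFac with hp
      have hpp : p.Prime := Nat.minFac_prime hk1
      obtain ⟨k', hk'⟩ : p ∣ k := Nat.minFac_dvd k
      have hk'pos : 0 < k' := by
        apply Nat.pos_of_ne_zero
        intro h0
        rw [h0, mul_zero] at hk'
        omega
      obtain ⟨m', hm'⟩ := hmodp p hpp m ⟨(k' : ℤ) • n, by
        rw [hm, hk']; push_cast; rw [mul_smul]⟩
      have hfm' : f m' = (k' : ℤ) • n := by
        have hpne : (p : ℤ) ≠ 0 := by exact_mod_cast hpp.ne_zero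
        apply smul_right_injective N hpne
        show (p : ℤ) • f m' = (p : ℤ) • ((k' : ℤ) • n)
        rw [← map_zsmul f, ← hm', hm, hk']
        push_cast; rw [mul_smul]
      exact ih k' (by
        have := hpp.two_le
        calc k' < p * k' := by nlinarith
        _ = k := hk'.symm) hk'pos n m' hfm'

end aux

/-- Let `f : M → N` be a homomorphism of torsion-free abelian groups.
If for every prime `p` the induced map `M/pM → N/pN` is injective (stated elementwise:
if `f m` is divisible by `p` then so is `m`), and the induced map
`M ⊗_ℤ ℚ → N ⊗_ℤ ℚ` is an isomorphism, then `f` is an isomorphism. -/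
theorem addMonoidHom_bijective_of_mod_p_injective_of_rat_bijective
    {M N : Type*} [AddCommGroup M] [AddCommGroup N]
    [NoZeroSMulDivisors ℤ M] [NoZeroSMulDivisors ℤ N]
    (f : M →+ N)
    (hmodp : ∀ p : ℕ, p.Prime → ∀ m : M,
      (∃ n : N, f m = (p : ℤ) • n) → ∃ m' : M, m = (p : ℤ) • m')
    (hQ : Function.Bijective (f.toIntLinearMap.baseChange ℚ)) :
    Function.Bijective f := by
  have hcomm : ∀ m : M, (f.toIntLinearMap.baseChange ℚ) (TensorProduct.mk ℤ ℚ M 1 m)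
      = TensorProduct.mk ℤ ℚ N 1 (f m) := by
    intro m
    simp [TensorProduct.mk_apply, LinearMap.baseChange_tmul]
  constructor
  · intro a b hab
    apply ratTensor_injective (M := M)
    apply hQ.1
    rw [hcomm, hcomm, hab]
  · intro n
    obtain ⟨q, hq⟩ := hQ.2 (TensorProduct.mk ℤ ℚ N 1 n)
    have hloc := isLocalizedModule_ratTensor (M := M)
    obtain ⟨⟨m, s⟩, hs⟩ :=
      IsLocalizedModule.surj (S := nonZeroDivisors ℤ) (TensorProduct.mk ℤ ℚ M 1) q
    have hfm : f m = (s : ℤ) • n := by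
      apply ratTensor_injective (M := N)
      have hs' : (s : ℤ) • q = TensorProduct.mk ℤ ℚ M 1 m := hs
      rw [← hcomm, ← hs', map_zsmul, hq, ← map_zsmul]
    have hsne : (s : ℤ) ≠ 0 := nonZeroDivisors.coe_ne_zero s
    rcases le_or_gt 0 (s : ℤ) with hpos | hneg
    · have : f m = ((s : ℤ).natAbs : ℤ) • n := by
        rwa [Int.natAbs_of_nonneg hpos]
      exact key_descent f hmodp (s : ℤ).natAbs (by omega) n m this
    · have : f (-m) = (((s : ℤ).natAbs : ℤ)) • n := by
        rw [map_neg, hfm, ← neg_smul]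
        congr 1
        omega
      exact key_descent f hmodp (s : ℤ).natAbs (by omega) n (-m) this
end

section
/- Let Ĝ be a split semisimple group of rank ≥ 1 with maximal torus T̂, character lattice X = X*(T̂), simple roots Δ, Weyl group W, and let 2ρ∨ be the sum of the positive coroots. Write Q_pos ⊆ X for the submonoid generated by the simple roots, and P⁺_pos ⊆ X for the submonoid generated by the dominant weights together with the simple roots. For λ ∈ X let λ₋ denote the unique antidominant element of the orbit Wλ. Then for every λ ∈ X and n ∈ ℤ the following are equivalent: (i) there exists μ ∈ P⁺_pos with ⟨μ, 2ρ∨⟩ = n and μ + λ₋ ∈ Q_pos; (ii) ⟨λ, 2ρ∨⟩ ≡ n (mod 2) and ⟨λ₋, 2ρ∨⟩ ≥ −n. -/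
/-!
Every element of `Q_pos` has `⟨·, 2ρ∨⟩` in `2ℕ`, and `λ − λ₋` lies in the root lattice, so
(i) forces `n + ⟨λ₋, 2ρ∨⟩ = ⟨μ + λ₋, 2ρ∨⟩ ∈ 2ℕ`, which is (ii). Conversely, if
`n + ⟨λ₋, 2ρ∨⟩ = 2k` with `k ∈ ℕ`, then `μ = −λ₋ + k•α` for any simple root `α` works:
`−λ₋` is dominant and `μ + λ₋ = k•α`.
-/

namespace AddMonoidHom

variable {X : Type*} [AddCommGroup X] {S : Set X} {f : X →+ ℤ} {x : X}

theorem dvd_of_mem_addSubgroupClosure {m : ℤ} (hS : ∀ a ∈ S, m ∣ f a)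
    (hx : x ∈ AddSubgroup.closure S) : m ∣ f x := by
  have hle : AddSubgroup.closure S ≤ (AddSubgroup.zmultiples m).comap f :=
    (AddSubgroup.closure_le _).mpr fun a ha => Int.mem_zmultiples_iff.mpr (hS a ha)
  exact Int.mem_zmultiples_iff.mp (hle hx)

theorem exists_eq_nsmul_of_mem_addSubmonoidClosure {m : ℤ} (hS : ∀ a ∈ S, f a = m)
    (hx : x ∈ AddSubmonoid.closure S) : ∃ k : ℕ, f x = k • m := by
  have hle : AddSubmonoid.closure S ≤ (AddSubmonoid.multiples m).comap f :=
    AddSubmonoid.closure_le.mpr fun a ha => ⟨1, by simp [hS a ha]⟩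
  obtain ⟨k, hk⟩ := hle hx
  exact ⟨k, hk.symm⟩

end AddMonoidHom

theorem vinberg_weight_condition_general
    {X : Type*} [AddCommGroup X]
    (Δ : Finset X) (hΔ : Δ.Nonempty)
    (deg : X →+ ℤ) (hdeg : ∀ a ∈ Δ, deg a = 2)
    (Dom : Set X)
    (lam lamminus : X)
    (hanti : -lamminus ∈ Dom)
    (hdiff : lam - lamminus ∈ AddSubgroup.closure (Δ : Set X))
    (n : ℤ) :
    (∃ μ ∈ AddSubmonoid.closure (Dom ∪ (Δ : Set X)),
        deg μ = n ∧ μ + lamminus ∈ AddSubmonoid.closure (Δ : Set X)) ↔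
      (deg lam ≡ n [ZMOD 2] ∧ -n ≤ deg lamminus) := by
  have hpar : 2 ∣ deg lam - deg lamminus := by
    simpa using deg.dvd_of_mem_addSubgroupClosure (fun a ha => by simp [hdeg a ha]) hdiff
  rw [Int.ModEq]
  constructor
  · rintro ⟨μ, -, rfl, hq⟩
    obtain ⟨k, hk⟩ := deg.exists_eq_nsmul_of_mem_addSubmonoidClosure hdeg hq
    rw [map_add, nsmul_eq_mul] at hk
    omega
  · rintro ⟨hmod, hge⟩
    obtain ⟨a, ha⟩ := hΔ
    obtain ⟨k, hk⟩ : ∃ k : ℕ, n + deg lamminus = 2 * k :=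
      ⟨((n + deg lamminus) / 2).toNat, by omega⟩
    have ha_Δ : a ∈ AddSubmonoid.closure (Δ : Set X) := AddSubmonoid.subset_closure ha
    have ha_Dom_Δ : a ∈ AddSubmonoid.closure (Dom ∪ (Δ : Set X)) :=
      AddSubmonoid.subset_closure (Or.inr ha)
    refine ⟨-lamminus + k • a, ?_, ?_, ?_⟩
    · exact add_mem (AddSubmonoid.subset_closure (Or.inl hanti)) (nsmul_mem ha_Dom_Δ k)
    · rw [map_add, map_neg, map_nsmul, hdeg a ha, nsmul_eq_mul]
      omega
    · rw [neg_add_cancel_comm]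
      exact nsmul_mem ha_Δ k

/-- Root-datum combinatorics for the Vinberg monoid.  `X` is the character
lattice of `Ĝ`, `Δ` the (nonempty, since the rank is ≥ 1) set of simple roots,
`deg = ⟨·, 2ρ∨⟩` the pairing with the sum of positive coroots (so `deg a = 2` for each
simple root `a`), `Dom` the set of dominant weights (which pair nonnegatively with
`2ρ∨`), `lamminus = λ₋` the antidominant representative of the Weyl orbit of `λ = lam`
(so `-λ₋` is dominant, and `λ − λ₋` lies in the root lattice).
Then for every `n : ℤ`: there exists `μ` in the submonoid `P⁺_pos` generated by the
dominant weights and the simple roots with `⟨μ, 2ρ∨⟩ = n` and `μ + λ₋` in the submonoid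
`Q_pos` generated by the simple roots, if and only if
`⟨λ, 2ρ∨⟩ ≡ n (mod 2)` and `⟨λ₋, 2ρ∨⟩ ≥ −n`. -/
theorem vinberg_weight_condition
    {X : Type*} [AddCommGroup X]
    (Δ : Finset X) (hΔ : Δ.Nonempty)
    (deg : X →+ ℤ) (hdeg : ∀ a ∈ Δ, deg a = 2)
    (Dom : Set X) (hDom : ∀ x ∈ Dom, 0 ≤ deg x)
    (lam lamminus : X)
    (hanti : -lamminus ∈ Dom)
    (hdiff : lam - lamminus ∈ AddSubgroup.closure (Δ : Set X))
    (n : ℤ) :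
    (∃ μ ∈ AddSubmonoid.closure (Dom ∪ (Δ : Set X)),
        deg μ = n ∧ μ + lamminus ∈ AddSubmonoid.closure (Δ : Set X)) ↔
      (deg lam ≡ n [ZMOD 2] ∧ -n ≤ deg lamminus) :=
  vinberg_weight_condition_general Δ hΔ deg hdeg Dom lam lamminus hanti hdiff n
end

section
/- Let X be a topological space equipped with a finite partition X = ⨆_{w ∈ W} X_w into locally closed subsets such that the closure of each X_w in X is a union of parts X_v. Then the partition is filtrable: there exists a finite decreasing chain X = X_0 ⊇ X_1 ⊇ ⋯ ⊇ X_m = ∅ of closed subsets of X such that each difference X_{j−1} ∖ X_j is exactly one of the parts X_w, and every part occurs exactly once in this way. -/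
/-- A finite partition of a topological space `X` into locally closed
pieces, such that the closure of each piece is a union of pieces, is filtrable:
there is a finite decreasing chain `X = c 0 ⊇ c 1 ⊇ ⋯ ⊇ c m = ∅` of closed subsets
whose successive differences are exactly the pieces, each piece occurring exactly
once (via a bijection `e : Fin m ≃ W`). -/
theorem finite_stratification_filtrable
    {X : Type*} [TopologicalSpace X] {W : Type*} [Fintype W]
    (S : W → Set X)
    (hdisj : ∀ v w : W, v ≠ w → Disjoint (S v) (S w))
    (hcover : ⋃ w, S w = Set.univ)
    (hlc : ∀ w, IsLocallyClosed (S w))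
    (hclos : ∀ w, ∃ V : Set W, closure (S w) = ⋃ v ∈ V, S v) :
    ∃ (m : ℕ) (c : Fin (m + 1) → Set X) (e : Fin m ≃ W),
      c 0 = Set.univ ∧ c (Fin.last m) = ∅ ∧
      (∀ j : Fin m, c j.succ ⊆ c j.castSucc) ∧
      (∀ j : Fin (m + 1), IsClosed (c j)) ∧
      (∀ j : Fin m, c j.castSucc \ c j.succ = S (e j)) := by
  classical
  -- key antisymmetry fact, from local closedness
  have key : ∀ v w : W, (S v).Nonempty → S v ⊆ closure (S w) → S w ⊆ closure (S v) → v = w := by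
    intro v w hv hvw hwv
    by_contra hne
    obtain ⟨U, Z, hU, hZ, hUZ⟩ := hlc v
    obtain ⟨x, hx⟩ := hv
    have hxU : x ∈ U := (hUZ ▸ hx).1
    have hxw : x ∈ closure (S w) := hvw hx
    obtain ⟨y, hyU, hyw⟩ := mem_closure_iff.mp hxw U hU hxU
    have hclZ : closure (S v) ⊆ Z :=
      closure_minimal (by rw [hUZ]; exact Set.inter_subset_right) hZ
    have hyv : y ∈ S v := by rw [hUZ]; exact ⟨hyU, hclZ (hwv hyw)⟩
    exact Set.disjoint_left.mp (hdisj v w hne) hyv hyw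
  letI P : PartialOrder W :=
  { le := fun v w => v = w ∨ (S w ⊆ closure (S v) ∧ (S w).Nonempty)
    le_refl := fun v => Or.inl rfl
    le_trans := by
      rintro u v w (rfl | ⟨h1, h2⟩) h'
      · exact h'
      rcases h' with rfl | ⟨h3, h4⟩
      · exact Or.inr ⟨h1, h2⟩
      · refine Or.inr ⟨h3.trans ?_, h4⟩
        calc closure (S v) ⊆ closure (closure (S u)) := closure_mono h1
        _ = closure (S u) := closure_closure
    le_antisymm := by
      rintro v w (rfl | ⟨h1, h2⟩) h'
      · rfl
      rcases h' with rfl | ⟨h3, h4⟩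
      · rfl
      · exact (key w v h2 h1 h3).symm }
  letI : Fintype (LinearExtension W) := ‹Fintype W›
  let f := monoEquivOfFin (LinearExtension W)
    (rfl : Fintype.card (LinearExtension W) = Fintype.card W)
  set m := Fintype.card W with hm
  let e : Fin m ≃ W := f.toEquiv
  have hmono : ∀ i i' : Fin m, P.le (e i) (e i') → i ≤ i' := by
    intro i i' h
    exact f.le_iff_le.mp ((@toLinearExtension W P).monotone h)
  let c : Fin (m + 1) → Set X := fun j => ⋃ i : Fin m, ⋃ _ : (j : ℕ) ≤ (i : ℕ), S (e i)
  -- closure of each piece with high index stays in the tail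
  have htail : ∀ (j : ℕ) (i : Fin m), j ≤ (i : ℕ) → ∀ x ∈ closure (S (e i)),
      ∃ i' : Fin m, j ≤ (i' : ℕ) ∧ x ∈ S (e i') := by
    intro j i hji x hx
    obtain ⟨V, hV⟩ := hclos (e i)
    rw [hV] at hx
    obtain ⟨v, hvV, hxv⟩ := by
      simpa using hx
    have hle : P.le (e i) v := by
      refine Or.inr ⟨?_, ⟨x, hxv⟩⟩
      rw [hV]
      exact Set.subset_iUnion₂ (s := fun v _ => S v) v hvV
    refine ⟨e.symm v, le_trans hji ?_, by simpa using hxv⟩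
    refine hmono i (e.symm v) ?_
    rwa [show e (e.symm v) = v from e.apply_symm_apply v]
  have hclosed : ∀ j : Fin (m + 1), IsClosed (c j) := by
    intro j
    have hc : c j = ⋃ i : Fin m, ⋃ _ : (j : ℕ) ≤ (i : ℕ), closure (S (e i)) := by
      apply Set.Subset.antisymm
      · exact Set.iUnion_mono fun i => Set.iUnion_mono fun h => subset_closure
      · intro x hx
        simp only [Set.mem_iUnion] at hx ⊢
        obtain ⟨i, hji, hxi⟩ := hx
        obtain ⟨i', hji', hxi'⟩ := htail j i hji x hxi
        exact Set.mem_iUnion.mpr ⟨i', Set.mem_iUnion.mpr ⟨hji', hxi'⟩⟩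
    rw [hc]
    exact isClosed_iUnion_of_finite fun i => isClosed_iUnion_of_finite fun _ => isClosed_closure
  have hdiff : ∀ j : Fin m, c j.castSucc \ c j.succ = S (e j) := by
    intro j
    apply Set.Subset.antisymm
    · rintro x ⟨hx1, hx2⟩
      simp only [c, Set.mem_iUnion, Fin.coe_castSucc] at hx1
      obtain ⟨i, hji, hxi⟩ := hx1
      rcases eq_or_lt_of_le hji with heq | hlt
      · rwa [show i = j from Fin.ext heq.symm] at hxi
      · exact absurd (by
          simp only [c, Set.mem_iUnion, Fin.val_succ]
          exact ⟨i, hlt, hxi⟩) hx2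
    · intro x hx
      constructor
      · simp only [c, Set.mem_iUnion, Fin.coe_castSucc]
        exact ⟨j, le_refl _, hx⟩
      · intro hmem
        simp only [c, Set.mem_iUnion, Fin.val_succ] at hmem
        obtain ⟨i, hji, hxi⟩ := hmem
        have hne : e i ≠ e j := fun h => by
          have : i = j := e.injective h
          omega
        exact Set.disjoint_left.mp (hdisj (e i) (e j) hne) hxi hx
  refine ⟨m, c, e, ?_, ?_, ?_, hclosed, hdiff⟩
  · apply Set.eq_univ_of_univ_subset
    intro x _
    have : x ∈ ⋃ w, S w := by rw [hcover]; trivial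
    obtain ⟨w, hw⟩ := Set.mem_iUnion.mp this
    simp only [c, Set.mem_iUnion]
    exact ⟨e.symm w, Nat.zero_le _, by simpa using hw⟩
  · apply Set.eq_empty_of_forall_notMem
    intro x hx
    simp only [c, Set.mem_iUnion, Fin.val_last] at hx
    obtain ⟨i, hmi, _⟩ := hx
    exact absurd hmi (not_le.mpr i.isLt)
  · intro j
    apply Set.iUnion_mono fun i => ?_
    apply Set.iUnion_subset fun h => ?_
    exact Set.subset_iUnion_of_subset (by simp at h ⊢; omega) subset_rfl
end

section
/- Let K be an infinite field and k ≥ 0. Call a subset C ⊆ K^k a box cell if C = ∏_{i=1}^k S_i with each S_i ∈ {K, K∖{0}, {0}}. Suppose X ⊆ K^k is a disjoint union of finitely many box cells. Then there exists a finite decreasing chain X = X_0 ⊇ X_1 ⊇ ⋯ ⊇ X_m = ∅ such that each X_j is closed in X for the Zariski topology induced from K^k, and each difference X_{j−1} ∖ X_j is a box cell. -/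
/-- A subset of `K^k` is Zariski closed if it is the zero locus of an ideal of
polynomials. -/
def ZarClosed (K : Type*) [Field K] (k : ℕ) (C : Set (Fin k → K)) : Prop :=
  ∃ I : Ideal (MvPolynomial (Fin k) K), C = MvPolynomial.zeroLocus K I

/-- A box cell in `K^k`: a product `∏ S_i` with each `S_i ∈ {K, K∖{0}, {0}}`. -/
def IsBoxCell (K : Type*) [Field K] (k : ℕ) (C : Set (Fin k → K)) : Prop :=
  ∃ S : Fin k → Set K,
    (∀ i, S i = Set.univ ∨ S i = {(0 : K)}ᶜ ∨ S i = {(0 : K)}) ∧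
    C = {x | ∀ i, x i ∈ S i}

/-!
A finite union of box cells is a finite union of tori `T_s = {x | supp x = s}`, since membership
in a box cell depends only on the support. Let `s` be maximal for inclusion among the supports
occurring in `X`. Then `T_s` is the part of `X` where the monomial `∏_{i ∈ s} x_i` does not
vanish, so the union of the remaining tori is Zariski closed in `X`, and induction on the number
of tori peels them off one at a time.
-/

open MvPolynomial

section

variable {K : Type*} [Field K] {k : ℕ}

theorem zarClosed_univ : ZarClosed K k Set.univ :=
  ⟨⊥, zeroLocus_bot.symm⟩

theorem ZarClosed.inter {C D : Set (Fin k → K)} (hC : ZarClosed K k C) (hD : ZarClosed K k D) :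
    ZarClosed K k (C ∩ D) := by
  obtain ⟨I, rfl⟩ := hC
  obtain ⟨J, rfl⟩ := hD
  exact ⟨I ⊔ J, zeroLocus_vanishingIdeal_galoisConnection.l_sup.symm⟩

theorem zarClosed_setOf_eval_eq_zero (p : MvPolynomial (Fin k) K) :
    ZarClosed K k {x | eval x p = 0} :=
  ⟨Ideal.span {p}, by simp [zeroLocus_span]⟩

theorem IsBoxCell.mem_of_support_eq {C : Set (Fin k → K)} (hC : IsBoxCell K k C)
    {x y : Fin k → K} (hx : x ∈ C) (hxy : Function.support y = Function.support x) : y ∈ C := by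
  obtain ⟨S, hS, rfl⟩ := hC
  intro i
  have hzero : y i = 0 ↔ x i = 0 := by
    simpa only [Function.mem_support, not_not] using (Set.ext_iff.mp hxy i).not
  have hxi := hx i
  rcases hS i with h | h | h <;> rw [h] at hxi ⊢
  · trivial
  · exact fun hy => hxi (hzero.mp hy)
  · exact hzero.mpr hxi

def coordTorus (s : Finset (Fin k)) : Set (Fin k → K) := {x | Function.support x = s}

theorem mem_coordTorus_iff {s : Finset (Fin k)} {x : Fin k → K} :
    x ∈ coordTorus s ↔ ∀ i, x i ≠ 0 ↔ i ∈ s := by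
  simp only [coordTorus, Set.mem_ofPred_eq, Set.ext_iff, Function.mem_support, Finset.mem_coe]

theorem isBoxCell_coordTorus (s : Finset (Fin k)) : IsBoxCell K k (coordTorus s) := by
  classical
  refine ⟨fun i => if i ∈ s then {0}ᶜ else {0}, fun i => ?_, ?_⟩
  · by_cases h : i ∈ s <;> simp [h]
  · ext x
    rw [mem_coordTorus_iff]
    refine forall_congr' fun i => ?_
    by_cases h : i ∈ s <;> simp [h]

theorem mem_coordTorus_support (x : Fin k → K) [Fintype (Function.support x)] :
    x ∈ coordTorus (Function.support x).toFinset := by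
  simp [coordTorus]

theorem eq_of_mem_coordTorus {s t : Finset (Fin k)} {x : Fin k → K}
    (hs : x ∈ coordTorus s) (ht : x ∈ coordTorus t) : s = t :=
  Finset.coe_injective (hs.symm.trans ht)

theorem biUnion_coordTorus_diff_erase {F : Finset (Finset (Fin k))} {s : Finset (Fin k)}
    (hs : s ∈ F) :
    (⋃ t ∈ F, coordTorus t) \ (⋃ t ∈ F.erase s, coordTorus t) =
      (coordTorus s : Set (Fin k → K)) := by
  ext x
  simp only [Set.mem_sdiff, Set.mem_iUnion, Finset.mem_erase, exists_prop, not_exists, not_and]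
  constructor
  · rintro ⟨⟨t, ht, hx⟩, hnot⟩
    by_contra hxs
    exact hnot t ⟨fun hts => hxs (hts ▸ hx), ht⟩ hx
  · exact fun hx => ⟨⟨s, hs, hx⟩, fun t ⟨hts, _⟩ ht => hts (eq_of_mem_coordTorus ht hx)⟩

theorem biUnion_erase_coordTorus_eq {F : Finset (Finset (Fin k))} {s : Finset (Fin k)}
    (hs : Maximal (· ∈ F) s) :
    ⋃ t ∈ F.erase s, (coordTorus t : Set (Fin k → K)) =
      {x | eval x (∏ i ∈ s, X i) = 0} ∩ ⋃ t ∈ F, coordTorus t := by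
  ext x
  simp only [Set.mem_iUnion, Set.mem_inter_iff, Set.mem_ofPred_eq, map_prod, eval_X,
    Finset.prod_eq_zero_iff, Finset.mem_erase, exists_prop]
  constructor
  · rintro ⟨t, ⟨hts, ht⟩, hx⟩
    refine ⟨?_, t, ht, hx⟩
    by_contra! hnonzero
    have hst : s ⊆ t := fun i hi => (mem_coordTorus_iff.mp hx i).mp (hnonzero i hi)
    exact hts (hs.eq_of_le ht hst).symm
  · rintro ⟨⟨i, hi, hxi⟩, t, ht, hx⟩
    refine ⟨t, ⟨?_, ht⟩, hx⟩
    rintro rfl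
    exact (mem_coordTorus_iff.mp hx i).mpr hi hxi

variable (K k) in
def IsBoxFiltrable (X : Set (Fin k → K)) : Prop :=
  ∃ (m : ℕ) (c : Fin (m + 1) → Set (Fin k → K)),
    c 0 = X ∧ c (Fin.last m) = ∅ ∧
    (∀ j : Fin m, c j.succ ⊆ c j.castSucc) ∧
    (∀ j : Fin (m + 1), ∃ C, ZarClosed K k C ∧ c j = C ∩ X) ∧
    (∀ j : Fin m, IsBoxCell K k (c j.castSucc \ c j.succ))

theorem isBoxFiltrable_empty : IsBoxFiltrable K k ∅ :=
  ⟨0, fun _ => ∅, rfl, rfl, finZeroElim, fun _ => ⟨Set.univ, zarClosed_univ, by simp⟩,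
    finZeroElim⟩

theorem IsBoxFiltrable.of_closed_of_isBoxCell_diff {X Y C : Set (Fin k → K)}
    (hY : IsBoxFiltrable K k Y) (hC : ZarClosed K k C) (hYX : Y = C ∩ X)
    (hcell : IsBoxCell K k (X \ Y)) : IsBoxFiltrable K k X := by
  obtain ⟨m, c, h0, hlast, hmono, hclosed, hcells⟩ := hY
  refine ⟨m + 1, Fin.cons X c, rfl, hlast, ?_, ?_, ?_⟩
  · refine Fin.cases ?_ fun j => ?_
    · simp [h0, hYX]
    · simpa [← Fin.succ_castSucc] using hmono j
  · refine Fin.cases ⟨Set.univ, zarClosed_univ, (Set.univ_inter X).symm⟩ fun j => ?_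
    obtain ⟨D, hD, hcj⟩ := hclosed j
    exact ⟨D ∩ C, hD.inter hC, by simp [hcj, hYX, Set.inter_assoc]⟩
  · refine Fin.cases (by simpa [h0] using hcell) fun j => ?_
    simpa [← Fin.succ_castSucc] using hcells j

theorem isBoxFiltrable_biUnion_coordTorus (F : Finset (Finset (Fin k))) :
    IsBoxFiltrable K k (⋃ s ∈ F, coordTorus s) := by
  induction F using Finset.strongInduction with
  | H F ih =>
    obtain rfl | hne := F.eq_empty_or_nonempty
    · simpa using (isBoxFiltrable_empty : IsBoxFiltrable K k ∅)
    obtain ⟨s, hs⟩ := F.exists_maximal hne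
    refine (ih _ (Finset.erase_ssubset hs.prop)).of_closed_of_isBoxCell_diff
      (zarClosed_setOf_eval_eq_zero _) (biUnion_erase_coordTorus_eq hs) ?_
    rw [biUnion_coordTorus_diff_erase hs.prop]
    exact isBoxCell_coordTorus s

theorem exists_finset_eq_biUnion_coordTorus {X : Set (Fin k → K)}
    (hX : ∀ x ∈ X, ∀ y, Function.support y = Function.support x → y ∈ X) :
    ∃ F : Finset (Finset (Fin k)), X = ⋃ s ∈ F, coordTorus s := by
  classical
  refine ⟨Finset.univ.filter fun s => coordTorus s ⊆ X, Set.Subset.antisymm (fun x hx => ?_) ?_⟩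
  · refine Set.mem_biUnion ?_ (mem_coordTorus_support x)
    refine Finset.mem_filter.mpr ⟨Finset.mem_univ _, fun y hy => hX x hx y ?_⟩
    rw [hy, Set.coe_toFinset]
  · exact Set.iUnion₂_subset fun s hs => (Finset.mem_filter.mp hs).2

end

theorem boxCell_decomposition_filtrable_general
    {K : Type*} [Field K] (k : ℕ) (X : Set (Fin k → K))
    (hX : ∃ (n : ℕ) (cells : Fin n → Set (Fin k → K)),
      (∀ i, IsBoxCell K k (cells i)) ∧
      (∀ i j : Fin n, i ≠ j → Disjoint (cells i) (cells j)) ∧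
      X = ⋃ i, cells i) :
    ∃ (m : ℕ) (c : Fin (m + 1) → Set (Fin k → K)),
      c 0 = X ∧ c (Fin.last m) = ∅ ∧
      (∀ j : Fin m, c j.succ ⊆ c j.castSucc) ∧
      (∀ j : Fin (m + 1), ∃ C, ZarClosed K k C ∧ c j = C ∩ X) ∧
      (∀ j : Fin m, IsBoxCell K k (c j.castSucc \ c j.succ)) := by
  obtain ⟨n, cells, hcells, -, rfl⟩ := hX
  obtain ⟨F, hF⟩ := exists_finset_eq_biUnion_coordTorus (X := ⋃ i, cells i)
    fun x hx y hxy => by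
      obtain ⟨i, hi⟩ := Set.mem_iUnion.mp hx
      exact Set.mem_iUnion.mpr ⟨i, (hcells i).mem_of_support_eq hi hxy⟩
  rw [hF]
  exact isBoxFiltrable_biUnion_coordTorus F

/-- Over an infinite field `K`, if `X ⊆ K^k` is a finite disjoint union of
box cells, then there is a finite decreasing chain `X = X_0 ⊇ X_1 ⊇ ⋯ ⊇ X_m = ∅` with
each `X_j` Zariski closed in `X` (i.e. the trace on `X` of a Zariski closed subset of
`K^k`) and each difference `X_{j-1} ∖ X_j` a box cell. -/
theorem boxCell_decomposition_filtrable
    {K : Type*} [Field K] [Infinite K] (k : ℕ) (X : Set (Fin k → K))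
    (hX : ∃ (n : ℕ) (cells : Fin n → Set (Fin k → K)),
      (∀ i, IsBoxCell K k (cells i)) ∧
      (∀ i j : Fin n, i ≠ j → Disjoint (cells i) (cells j)) ∧
      X = ⋃ i, cells i) :
    ∃ (m : ℕ) (c : Fin (m + 1) → Set (Fin k → K)),
      c 0 = X ∧ c (Fin.last m) = ∅ ∧
      (∀ j : Fin m, c j.succ ⊆ c j.castSucc) ∧
      (∀ j : Fin (m + 1), ∃ C, ZarClosed K k C ∧ c j = C ∩ X) ∧
      (∀ j : Fin m, IsBoxCell K k (c j.castSucc \ c j.succ)) :=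
  boxCell_decomposition_filtrable_general k X hX
end

section
/- Let G be a group, C an abelian group whose squaring map c ↦ c² is surjective, and ρ : C → G a group homomorphism such that ρ(ε)² lies in the center of G for every ε ∈ C with ε² = 1. Let C act on G by c · g = ρ(c) g ρ(c)⁻¹ and form the semidirect product G ⋊ C. Then N = {(ρ(ε)², ε) : ε ∈ C, ε² = 1} is a normal subgroup of the direct product G × C, and the map (g, t) ↦ (g ρ(t)⁻², t²) induces a group isomorphism (G × C)/N ≅ G ⋊ C. -/
/-- Let `G` be a group, `C` an abelian group with surjective squaring map,
and `ρ : C →* G` a homomorphism such that `ρ(ε)²` is central whenever `ε² = 1`.  Let `C`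
act on `G` by conjugation through `ρ` and form `G ⋊ C`.  Then
`N = {(ρ(ε)², ε) : ε² = 1}` is a normal subgroup of `G × C` and
`(g, t) ↦ (g ρ(t)⁻², t²)` induces an isomorphism `(G × C)/N ≅ G ⋊ C`; the latter is
expressed by exhibiting the map as a surjective homomorphism `G × C →* G ⋊ C`
with kernel exactly `N`. -/
theorem quotient_iso_semidirectProduct
    {G C : Type*} [Group G] [CommGroup C]
    (hsq : ∀ c : C, ∃ d : C, d ^ 2 = c)
    (ρ : C →* G)
    (hcen : ∀ ε : C, ε ^ 2 = 1 → ρ ε ^ 2 ∈ Subgroup.center G) :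
    ∃ N : Subgroup (G × C),
      (N : Set (G × C)) = {p : G × C | ∃ ε : C, ε ^ 2 = 1 ∧ p = (ρ ε ^ 2, ε)} ∧
      N.Normal ∧
      ∃ π : G × C →* SemidirectProduct G C (MulAut.conj.comp ρ),
        Function.Surjective π ∧ π.ker = N ∧
        ∀ (g : G) (t : C), π (g, t) = ⟨g * (ρ t ^ 2)⁻¹, t ^ 2⟩ := by
  let π : G × C →* SemidirectProduct G C (MulAut.conj.comp ρ) :=
    { toFun := fun p => ⟨p.1 * (ρ p.2 ^ 2)⁻¹, p.2 ^ 2⟩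
      map_one' := by
        ext <;> simp
      map_mul' := by
        rintro ⟨g₁, t₁⟩ ⟨g₂, t₂⟩
        have h : ρ (t₁ * t₂) ^ 2 = ρ t₁ ^ 2 * ρ t₂ ^ 2 := by
          rw [← map_pow, ← map_pow, ← map_pow, ← map_mul, mul_pow t₁ t₂]
        ext
        · simp only [SemidirectProduct.mul_left, MonoidHom.comp_apply, map_pow ρ,
            MulAut.conj_apply, Prod.fst_mul, Prod.snd_mul, h]
          group
        · simp only [SemidirectProduct.mul_right, Prod.snd_mul, mul_pow] }
  have hπ : ∀ (g : G) (t : C), π (g, t) = ⟨g * (ρ t ^ 2)⁻¹, t ^ 2⟩ := fun g t => rfl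
  refine ⟨π.ker, ?_, π.normal_ker, π, ?_, rfl, hπ⟩
  · ext ⟨g, t⟩
    simp only [SetLike.mem_coe, MonoidHom.mem_ker, Set.mem_setOf_eq]
    constructor
    · intro h
      have h1 : g * (ρ t ^ 2)⁻¹ = 1 := congrArg SemidirectProduct.left h
      have h2 : t ^ 2 = 1 := congrArg SemidirectProduct.right h
      exact ⟨t, h2, by rw [Prod.ext_iff]; exact ⟨by rwa [mul_inv_eq_one] at h1, rfl⟩⟩
    · rintro ⟨ε, hε, h⟩
      rw [h, hπ]
      ext
      · simp
      · simpa using hε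
  · rintro ⟨g, c⟩
    obtain ⟨d, hd⟩ := hsq c
    exact ⟨(g * ρ d ^ 2, d), by rw [hπ]; ext <;> simp [hd]⟩
end

section
/- Let F : A → B be a fully faithful exact functor between abelian categories admitting a left adjoint L and a right adjoint R. Assume that for every object b of B the unit morphism b → F(L(b)) is an epimorphism and the counit morphism F(R(b)) → b is a monomorphism. Then the essential image of F is closed under subobjects and quotients in B. -/
open CategoryTheory CategoryTheory.Limits

/-! Every map `f : b ⟶ F a` factors through the unit `b ⟶ F (L b)`, so if `f` is mono then so is
the unit; being also epi in the balanced category `B`, the unit is an isomorphism and `b ≅ F (L b)`.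
Dually, every map `F a ⟶ b` factors through the counit `F (R b) ⟶ b`. -/

namespace CategoryTheory.Adjunction

variable {C D : Type*} [Category C] [Category D] {F : C ⥤ D} {G : D ⥤ C}

lemma mono_unit_app_of_mono (adj : F ⊣ G) {X : C} {Y : D} (f : X ⟶ G.obj Y) [Mono f] :
    Mono (adj.unit.app X) := by
  have hfac : adj.unit.app X ≫ G.map ((adj.homEquiv X Y).symm f) = f :=
    (adj.unit_comp_map_eq_iff _ f).2 rfl
  have : Mono (adj.unit.app X ≫ G.map ((adj.homEquiv X Y).symm f)) := by rwa [hfac]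
  exact mono_of_mono _ (G.map ((adj.homEquiv X Y).symm f))

lemma epi_counit_app_of_epi (adj : F ⊣ G) {X : C} {Y : D} (f : F.obj X ⟶ Y) [Epi f] :
    Epi (adj.counit.app Y) := by
  have hfac : F.map (adj.homEquiv X Y f) ≫ adj.counit.app Y = f :=
    (adj.eq_unit_comp_map_iff f _).1 rfl
  have : Epi (F.map (adj.homEquiv X Y f) ≫ adj.counit.app Y) := by rwa [hfac]
  exact epi_of_epi (F.map (adj.homEquiv X Y f)) _

lemma mem_essImage_of_mono_of_epi_unit [Balanced C] (adj : F ⊣ G) {X : C} {Y : D}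
    (f : X ⟶ G.obj Y) [Mono f] [Epi (adj.unit.app X)] : G.essImage X :=
  have := adj.mono_unit_app_of_mono f
  have := isIso_of_mono_of_epi (adj.unit.app X)
  adj.mem_essImage_of_unit_isIso X

lemma mem_essImage_of_epi_of_mono_counit [Balanced D] (adj : F ⊣ G) {X : C} {Y : D}
    (f : F.obj X ⟶ Y) [Epi f] [Mono (adj.counit.app Y)] : F.essImage Y :=
  have := adj.epi_counit_app_of_epi f
  have := isIso_of_mono_of_epi (adj.counit.app Y)
  adj.mem_essImage_of_counit_isIso Y

end CategoryTheory.Adjunction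

theorem essImage_closed_under_sub_and_quot_general
    {A B : Type*} [Category A] [Category B] [Abelian B]
    (F : A ⥤ B)
    (L R : B ⥤ A) (adjL : L ⊣ F) (adjR : F ⊣ R)
    (hepi : ∀ b : B, Epi (adjL.unit.app b))
    (hmono : ∀ b : B, Mono (adjR.counit.app b)) :
    (∀ (a : A) (b : B) (f : b ⟶ F.obj a), Mono f → F.essImage b) ∧
    (∀ (a : A) (b : B) (f : F.obj a ⟶ b), Epi f → F.essImage b) :=
  ⟨fun _ b f _ => have := hepi b; adjL.mem_essImage_of_mono_of_epi_unit f,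
    fun _ b f _ => have := hmono b; adjR.mem_essImage_of_epi_of_mono_counit f⟩

/-- Let `F : A ⥤ B` be a fully faithful exact functor between abelian
categories, with left adjoint `L` and right adjoint `R`.  If for every `b : B` the
unit `b ⟶ F (L b)` is an epimorphism and the counit `F (R b) ⟶ b` is a monomorphism,
then the essential image of `F` is closed under subobjects and quotients in `B`. -/
theorem essImage_closed_under_sub_and_quot
    {A B : Type*} [Category A] [Category B] [Abelian A] [Abelian B]
    (F : A ⥤ B) [F.Full] [F.Faithful]
    [PreservesFiniteLimits F] [PreservesFiniteColimits F]
    (L R : B ⥤ A) (adjL : L ⊣ F) (adjR : F ⊣ R)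
    (hepi : ∀ b : B, Epi (adjL.unit.app b))
    (hmono : ∀ b : B, Mono (adjR.counit.app b)) :
    (∀ (a : A) (b : B) (f : b ⟶ F.obj a), Mono f → F.essImage b) ∧
    (∀ (a : A) (b : B) (f : F.obj a ⟶ b), Epi f → F.essImage b) :=
  essImage_closed_under_sub_and_quot_general F L R adjL adjR hepi hmono
end
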